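/- Let $X_1, X_2, \ldots$ be iid with the Pareto distribution $F(x) = 1 - x^{-\alpha}$ for $x > 1$, where $\alpha > 0$, and let $X_{1:n} \le \cdots \le X_{n:n}$ be the order statistics of the first $n$. Then the random sets $\{(-\log(1 - \tfrac{i}{n+1}), \log X_{i:n}) : 1 \le i \le n\}$ converge in probability, in the Fell topology, to $\{(x, \tfrac{x}{\alpha}) : 0 \le x < \infty\}$; equivalently, for every continuous $h : \mathbb{R}^2 \to [0,\infty)$ with compact support, $\mathbb{E}\big[\max_{1 \le i \le n} h(-\log(1 - \tfrac{i}{n+1}), \log X_{i:n})\big] \to \sup_{x \ge 0} h(x, x/\alpha)$ as $n \to \infty$. -/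

import Mathlib

/-!
Write `N_n(x) = #{j < n | X_{j+1} ≤ x}`. Since the order statistics are an increasing
rearrangement of the sample, `X_{i:n} ≤ x ↔ i ≤ N_n(x)`. By the strong law, almost surely
`N_n(x)/n → F(x)` simultaneously at the countably many quantiles `x = F⁻¹(j/m)`; as the
exponential quantile function `p ↦ -log(1 - p)/α` is uniformly continuous on `[0, P]` for `P < 1`,
this forces `log X_{i:n}` uniformly close to `-log(1 - i/(n+1))/α` over `i/(n+1) ≤ P`. So almost
surely the QQ-plots converge to the ray in the Fell sense, hence `sup h` over them converges, and
since `h` is bounded, dominated convergence passes to expectations.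
-/

open MeasureTheory Filter Set ProbabilityTheory

/-- `ord n i ω` (for `1 ≤ i ≤ n`) is the `i`-th smallest among `X 1 ω, …, X n ω`:
increasing in `i`, and a rearrangement of the first `n` sample values. -/
def IsIncOrderStat {Ω : Type*} (X : ℕ → Ω → ℝ) (ord : ℕ → ℕ → Ω → ℝ) : Prop :=
  ∀ ω n, (∀ i j, 1 ≤ i → i ≤ j → j ≤ n → ord n i ω ≤ ord n j ω) ∧
    ∃ σ : Equiv.Perm (Fin n), ∀ i : Fin n, ord n (i.1 + 1) ω = X ((σ i).1 + 1) ω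

open scoped Finset Topology

theorem le_iff_le_card_filter_of_monotoneOn {n i : ℕ} {f : ℕ → ℝ}
    (hf : MonotoneOn f (Icc 1 n)) (hi : 1 ≤ i) (hin : i ≤ n) (x : ℝ) :
    f i ≤ x ↔ i ≤ #{k ∈ Finset.range n | f (k + 1) ≤ x} := by
  constructor
  · intro hfi
    calc i = #(Finset.range i) := (Finset.card_range i).symm
      _ ≤ _ := Finset.card_le_card fun k hk => by
        simp only [Finset.mem_range, Finset.mem_filter] at hk ⊢
        exact ⟨by omega, (hf ⟨by omega, by omega⟩ ⟨hi, hin⟩ (by omega)).trans hfi⟩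
  · intro hcard
    by_contra! hxf
    have : #{k ∈ Finset.range n | f (k + 1) ≤ x} ≤ #(Finset.range (i - 1)) :=
      Finset.card_le_card fun k hk => by
        simp only [Finset.mem_range, Finset.mem_filter] at hk ⊢
        by_contra! hki
        exact (hk.2.trans_lt hxf).not_ge (hf ⟨hi, hin⟩ ⟨by omega, by omega⟩ (by omega))
    rw [Finset.card_range] at this
    omega

theorem card_filter_range_eq_of_perm {n : ℕ} (σ : Equiv.Perm (Fin n)) {f g : ℕ → ℝ}
    (hfg : ∀ k : Fin n, f k = g (σ k)) (p : ℝ → Prop) [DecidablePred p] :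
    #{k ∈ Finset.range n | p (f k)} = #{k ∈ Finset.range n | p (g k)} := by
  rw [Finset.card_filter, Finset.card_filter,
    ← Fin.sum_univ_eq_sum_range (fun k => if p (f k) then 1 else 0),
    ← Fin.sum_univ_eq_sum_range (fun k => if p (g k) then 1 else 0)]
  simp only [hfg]
  exact Equiv.sum_comp σ (fun k : Fin n => if p (g k) then 1 else 0)

namespace IsIncOrderStat

variable {Ω : Type*} {X : ℕ → Ω → ℝ} {ord : ℕ → ℕ → Ω → ℝ}

theorem le_iff_le_card (hord : IsIncOrderStat X ord) (ω : Ω) {n i : ℕ} (hi : 1 ≤ i)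
    (hin : i ≤ n) (x : ℝ) :
    ord n i ω ≤ x ↔ i ≤ #{j ∈ Finset.range n | X (j + 1) ω ≤ x} := by
  obtain ⟨hmono, σ, hσ⟩ := hord ω n
  rw [le_iff_le_card_filter_of_monotoneOn (fun a ha b hb hab => hmono a b ha.1 hab hb.2) hi hin,
    card_filter_range_eq_of_perm σ (f := fun k => ord n (k + 1) ω) (g := fun j => X (j + 1) ω)
      hσ (· ≤ x)]

theorem measurable [MeasurableSpace Ω] (hord : IsIncOrderStat X ord) (hX : ∀ i, Measurable (X i))
    {n i : ℕ} (hi : 1 ≤ i) (hin : i ≤ n) : Measurable (ord n i) := by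
  refine measurable_of_Iic fun x => ?_
  have hcount : Measurable fun ω => #{j ∈ Finset.range n | X (j + 1) ω ≤ x} := by
    simp_rw [Finset.card_filter]
    exact Finset.measurable_sum _ fun j _ =>
      Measurable.ite (measurableSet_le (hX _) measurable_const) measurable_const measurable_const
  have : ord n i ⁻¹' Iic x = (fun ω => #{j ∈ Finset.range n | X (j + 1) ω ≤ x}) ⁻¹' Ici i := by
    ext ω
    exact hord.le_iff_le_card ω hi hin x
  rw [this]
  exact hcount measurableSet_Ici

end IsIncOrderStat

theorem le_card_of_abs_div_sub_lt {n i N : ℕ} {r Δ : ℝ} (hN : |(N : ℝ) / n - r| < Δ / 2)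
    (hn : 2 ≤ n * Δ) (hin : i ≤ n) (hr : i / (n + 1) + Δ ≤ r) : i ≤ N := by
  have hn0 : (0 : ℝ) < n := by
    rcases Nat.eq_zero_or_pos n with rfl | h
    · norm_num at hn
    · exact_mod_cast h
  have hN' : n * (r - Δ / 2) < N := by
    have := (abs_sub_lt_iff.1 hN).2
    rw [← lt_div_iff₀' hn0]; linarith
  have hi : (i : ℝ) = i / (n + 1) * (n + 1) := by field_simp
  have hp1 : (i : ℝ) / (n + 1) ≤ 1 := by
    rw [div_le_one (by positivity)]; exact_mod_cast hin.trans (Nat.le_succ n)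
  exact_mod_cast (show (i : ℝ) ≤ N by nlinarith)

theorem card_lt_of_abs_div_sub_lt {n i N : ℕ} {r Δ : ℝ} (hN : |(N : ℝ) / n - r| < Δ / 2)
    (hn : 0 < n) (hΔ : 0 < Δ) (hr : r + Δ ≤ i / (n + 1)) : N < i := by
  have hn0 : (0 : ℝ) < n := by exact_mod_cast hn
  have hN' : (N : ℝ) < n * (r + Δ / 2) := by
    have := (abs_sub_lt_iff.1 hN).1
    rw [← div_lt_iff₀' hn0]; linarith
  have hi : (i : ℝ) = i / (n + 1) * (n + 1) := by field_simp
  have hp0 : (0 : ℝ) ≤ i / (n + 1) := by positivity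
  exact_mod_cast (show (N : ℝ) < i by nlinarith)

section Grid

variable {Q : ℝ → ℝ} {m n : ℕ} {Y : ℕ → ℝ} {N : ℝ → ℕ}
  (hYN : ∀ i y, 1 ≤ i → i ≤ n → (Y i ≤ y ↔ i ≤ N y))
  (hgrid : ∀ j ∈ Finset.Ioo 0 m, |(N (Q (j / m)) : ℝ) / n - j / m| < 1 / m / 2)
include hYN hgrid

theorem le_quantile_floor_add_two_div {P : ℝ} (hm : 0 < m) (hmP : 2 < (1 - P) * m)
    (hn : 2 * m ≤ n) {i : ℕ} (hi : 1 ≤ i) (hin : i ≤ n) (hP : (i : ℝ) / (n + 1) ≤ P) :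
    Y i ≤ Q ((⌊(i : ℝ) / (n + 1) * m⌋₊ + 2 : ℕ) / m) := by
  set p := (i : ℝ) / (n + 1)
  have hm0 : (0 : ℝ) < m := by exact_mod_cast hm
  have hk : (⌊p * m⌋₊ : ℝ) ≤ p * m := Nat.floor_le (by positivity)
  have hk' : p * m < ⌊p * m⌋₊ + 1 := Nat.lt_floor_add_one _
  refine (hYN i _ hi hin).2 (le_card_of_abs_div_sub_lt (hgrid _ ?_) ?_ hin ?_)
  · refine Finset.mem_Ioo.2 ⟨by omega, ?_⟩
    have : ((⌊p * m⌋₊ + 2 : ℕ) : ℝ) < m := by push_cast; nlinarith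
    exact_mod_cast this
  · rw [mul_one_div, le_div_iff₀ hm0]
    exact_mod_cast hn
  · rw [le_div_iff₀ hm0, add_mul, one_div_mul_cancel hm0.ne']
    push_cast
    linarith

theorem quantile_floor_sub_one_div_lt (hn : 0 < n) {i : ℕ} (hi : 1 ≤ i) (hin : i ≤ n)
    (hk2 : 2 ≤ ⌊(i : ℝ) / (n + 1) * m⌋₊) :
    Q ((⌊(i : ℝ) / (n + 1) * m⌋₊ - 1 : ℕ) / m) < Y i := by
  set p := (i : ℝ) / (n + 1)
  have hm0 : (0 : ℝ) < m := by
    have := (Nat.floor_pos.1 (by omega : 0 < ⌊p * m⌋₊))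
    exact pos_of_mul_pos_right (by linarith) (by positivity)
  have hp1 : p < 1 := by
    rw [div_lt_one (by positivity)]
    exact_mod_cast Nat.lt_succ_of_le hin
  have hk : (⌊p * m⌋₊ : ℝ) ≤ p * m := Nat.floor_le (by positivity)
  have hj : ((⌊p * m⌋₊ - 1 : ℕ) : ℝ) = ⌊p * m⌋₊ - 1 := by
    rw [Nat.cast_sub (by omega), Nat.cast_one]
  refine lt_of_not_ge fun hle => ((hYN i _ hi hin).1 hle).not_gt ?_
  refine card_lt_of_abs_div_sub_lt (hgrid _ ?_) hn (by positivity) ?_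
  · refine Finset.mem_Ioo.2 ⟨by omega, ?_⟩
    have : ((⌊p * m⌋₊ - 1 : ℕ) : ℝ) < m := by rw [hj]; nlinarith
    exact_mod_cast this
  · rw [← le_sub_iff_add_le, div_le_iff₀ hm0, sub_mul, one_div_mul_cancel hm0.ne', hj]
    linarith

theorem abs_sub_quantile_lt_of_grid {δ η P : ℝ}
    (hQ : ∀ a ∈ Icc 0 ((1 + P) / 2), ∀ b ∈ Icc 0 ((1 + P) / 2), dist a b < η →
      dist (Q a) (Q b) < δ)
    (hm : 0 < m) (hmη : 2 < η * m) (hmP : 4 ≤ (1 - P) * m) (hn : 2 * m ≤ n)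
    (hY : ∀ i, 1 ≤ i → i ≤ n → Q 0 ≤ Y i) {i : ℕ} (hi : 1 ≤ i) (hin : i ≤ n)
    (hP : (i : ℝ) / (n + 1) ≤ P) :
    |Y i - Q (i / (n + 1))| < δ := by
  set p := (i : ℝ) / (n + 1)
  have hm0 : (0 : ℝ) < m := by exact_mod_cast hm
  have hk : (⌊p * m⌋₊ : ℝ) ≤ p * m := Nat.floor_le (by positivity)
  have hk' : p * m < ⌊p * m⌋₊ + 1 := Nat.lt_floor_add_one _
  have hclose (r : ℝ) (hr : 0 ≤ r) (hrp : |r * m - p * m| ≤ 2) : |Q r - Q p| < δ := by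
    have hrp' : |r - p| * m ≤ 2 := by rwa [← abs_of_pos hm0, ← abs_mul, sub_mul]
    have hK (s : ℝ) (hs : 0 ≤ s) (hsm : s * m ≤ p * m + 2) : s ∈ Icc 0 ((1 + P) / 2) :=
      ⟨hs, by nlinarith⟩
    rw [← Real.dist_eq]
    refine hQ r (hK r hr (by linarith [(abs_le.1 hrp).2])) p (hK p (by positivity) (by linarith)) ?_
    rw [Real.dist_eq]
    nlinarith [abs_nonneg (r - p)]
  have hupper := hclose ((⌊p * m⌋₊ + 2 : ℕ) / m) (by positivity) (by
    rw [div_mul_cancel₀ _ hm0.ne', abs_le]; push_cast; constructor <;> linarith)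
  have hlower : Q p - δ < Y i := by
    -- Below `p` there is a grid point only when `⌊p m⌋ ≥ 2`; otherwise `p < 2/m` and `hY` suffices.
    rcases Nat.lt_or_ge ⌊p * m⌋₊ 2 with hk2 | hk2
    · have hk1 : (⌊p * m⌋₊ : ℝ) ≤ 1 := by exact_mod_cast Nat.lt_succ_iff.1 hk2
      have := hclose 0 le_rfl (by rw [abs_le]; constructor <;> linarith)
      linarith [hY i hi hin, (abs_lt.1 this).1]
    · have hj : ((⌊p * m⌋₊ - 1 : ℕ) : ℝ) = ⌊p * m⌋₊ - 1 := by
        rw [Nat.cast_sub (by omega), Nat.cast_one]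
      have := hclose ((⌊p * m⌋₊ - 1 : ℕ) / m) (by positivity)
        (by rw [div_mul_cancel₀ _ hm0.ne', hj, abs_le]; constructor <;> linarith)
      linarith [(abs_lt.1 this).1, quantile_floor_sub_one_div_lt hYN hgrid (by omega) hi hin hk2]
  rw [abs_lt]
  constructor <;> linarith [(abs_lt.1 hupper).2,
    le_quantile_floor_add_two_div hYN hgrid hm (by linarith) hn hi hin hP]

end Grid

theorem eventually_abs_sub_quantile_lt {Q : ℝ → ℝ} (hQ : ContinuousOn Q (Ico 0 1))
    {Y : ℕ → ℕ → ℝ} {N : ℕ → ℝ → ℕ} (hY : ∀ n i, 1 ≤ i → i ≤ n → Q 0 ≤ Y n i)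
    (hYN : ∀ n i y, 1 ≤ i → i ≤ n → (Y n i ≤ y ↔ i ≤ N n y))
    (hN : ∀ j m : ℕ, 0 < j → j < m →
      Tendsto (fun n : ℕ => (N n (Q (j / m)) : ℝ) / n) atTop (𝓝 (j / m)))
    {δ P : ℝ} (hδ : 0 < δ) (hP : P < 1) :
    ∀ᶠ n : ℕ in atTop, ∀ i, 1 ≤ i → i ≤ n → (i : ℝ) / (n + 1) ≤ P →
      |Y n i - Q (i / (n + 1))| < δ := by
  have hQK : ContinuousOn Q (Icc 0 ((1 + P) / 2)) := hQ.mono fun x hx => ⟨hx.1, by linarith [hx.2]⟩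
  obtain ⟨η, hη, hQη⟩ :=
    Metric.uniformContinuousOn_iff.1 (isCompact_Icc.uniformContinuousOn_of_continuous hQK) δ hδ
  obtain ⟨m, hm⟩ := exists_nat_gt (2 / η + 4 / (1 - P))
  have hηm : 2 / η < m := by linarith [show 0 < 4 / (1 - P) by bound]
  have hPm : 4 / (1 - P) < m := by linarith [show 0 < 2 / η by positivity]
  have hm0 : (0 : ℝ) < m := by linarith [show 0 < 2 / η by positivity]
  have hgrid : ∀ᶠ n : ℕ in atTop,
      ∀ j ∈ Finset.Ioo 0 m, |(N n (Q (j / m)) : ℝ) / n - j / m| < 1 / m / 2 :=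
    (eventually_all_finset _).2 fun j hj =>
      (Metric.tendsto_nhds.1 (hN j m (Finset.mem_Ioo.1 hj).1 (Finset.mem_Ioo.1 hj).2)
        (1 / m / 2) (by positivity)).mono fun n hn => by rwa [Real.dist_eq] at hn
  filter_upwards [hgrid, eventually_ge_atTop (2 * m)] with n hgridn hn i hi hin hiP
  exact abs_sub_quantile_lt_of_grid (hYN n) hgridn hQη (by exact_mod_cast hm0)
    ((div_lt_iff₀' hη).1 hηm) ((div_le_iff₀' (by linarith)).1 hPm.le) hn (hY n) hi hin hiP

-- `hupper` and `hlower` are the two halves of Fell convergence of `T n` to `L`.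
theorem tendsto_sSup_image_of_forall_near {ι E : Type*} [PseudoMetricSpace E] {l : Filter ι}
    {h : E → ℝ} (hc : Continuous h) (h0 : ∀ x, 0 ≤ h x) (hs : HasCompactSupport h)
    {T : ι → Set E} {L : Set E}
    (hupper : ∀ K, IsCompact K → ∀ δ > 0, ∀ᶠ n in l, ∀ x ∈ T n ∩ K, ∃ y ∈ L, dist x y < δ)
    (hlower : ∀ y ∈ L, ∀ δ > 0, ∀ᶠ n in l, ∃ x ∈ T n, dist x y < δ) :
    Tendsto (fun n => sSup (h '' T n)) l (𝓝 (sSup (h '' L))) := by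
  obtain ⟨B, hB⟩ := hc.bounded_above_of_compact_support hs
  have hbdd (s : Set E) : BddAbove (h '' s) :=
    ⟨B, by rintro _ ⟨x, -, rfl⟩; exact (le_abs_self _).trans (hB x)⟩
  have hnonneg (s : Set E) : 0 ≤ sSup (h '' s) :=
    Real.sSup_nonneg (by rintro _ ⟨x, -, rfl⟩; exact h0 x)
  have hUC := Metric.uniformContinuous_iff.1 (hs.uniformContinuous_of_continuous hc)
  refine tendsto_order.2 ⟨fun a ha => ?_, fun b hb => ?_⟩
  · rcases lt_or_ge a 0 with ha0 | ha0
    · exact Eventually.of_forall fun n => ha0.trans_le (hnonneg _)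
    have hne : (h '' L).Nonempty := by
      by_contra hem
      rw [not_nonempty_iff_eq_empty.1 hem, Real.sSup_empty] at ha
      linarith
    obtain ⟨_, ⟨y, hyL, rfl⟩, hay⟩ := exists_lt_of_lt_csSup hne ha
    obtain ⟨δ, hδ, hδh⟩ := hUC (h y - a) (by linarith)
    filter_upwards [hlower y hyL δ hδ] with n ⟨x, hxT, hxy⟩
    have := abs_lt.1 (Real.dist_eq _ _ ▸ hδh hxy)
    exact (by linarith : a < h x).trans_le (le_csSup (hbdd _) (mem_image_of_mem h hxT))
  · obtain ⟨δ, hδ, hδh⟩ := hUC ((b - sSup (h '' L)) / 2) (by linarith)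
    filter_upwards [hupper _ hs δ hδ] with n hn
    refine (Real.sSup_le ?_ (by linarith [hnonneg L])).trans_lt
      (by linarith : sSup (h '' L) + (b - sSup (h '' L)) / 2 < b)
    rintro _ ⟨x, hxT, rfl⟩
    by_cases hxK : x ∈ tsupport h
    · obtain ⟨y, hyL, hxy⟩ := hn x ⟨hxT, hxK⟩
      have := abs_lt.1 (Real.dist_eq _ _ ▸ hδh hxy)
      linarith [le_csSup (hbdd L) (mem_image_of_mem h hyL)]
    · rw [image_eq_zero_of_notMem_tsupport hxK]
      linarith [hnonneg L]

theorem tendsto_natFloor_mul_add_one_div {p : ℝ} (hp : 0 ≤ p) :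
    Tendsto (fun n : ℕ => ((⌊p * (n + 1)⌋₊ + 1 : ℕ) : ℝ) / (n + 1)) atTop (𝓝 p) := by
  have hlim : Tendsto (fun n : ℕ => p + 1 / ((n : ℝ) + 1)) atTop (𝓝 p) := by
    simpa using (tendsto_const_nhds (x := p)).add (tendsto_one_div_add_atTop_nhds_zero_nat (𝕜 := ℝ))
  refine tendsto_of_tendsto_of_tendsto_of_le_of_le tendsto_const_nhds hlim (fun n => ?_) fun n => ?_
  · rw [le_div_iff₀ (by positivity)]
    push_cast
    linarith [Nat.lt_floor_add_one (p * (n + 1))]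
  · rw [div_le_iff₀ (by positivity), add_mul, one_div_mul_cancel (by positivity)]
    push_cast
    linarith [Nat.floor_le (by positivity : 0 ≤ p * (n + 1))]

def expQQPlot (n : ℕ) (Y : ℕ → ℝ) : Set (ℝ × ℝ) :=
  {q | ∃ i : ℕ, 1 ≤ i ∧ i ≤ n ∧ q = (-Real.log (1 - (i : ℝ) / ((n : ℝ) + 1)), Y i)}

def qqRay (α : ℝ) : Set (ℝ × ℝ) := {q | ∃ t : ℝ, 0 ≤ t ∧ q = (t, t / α)}

section QQPlot

variable {α : ℝ} {Y : ℕ → ℕ → ℝ}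
  (hY : ∀ δ > 0, ∀ P < 1, ∀ᶠ n : ℕ in atTop, ∀ i, 1 ≤ i → i ≤ n → (i : ℝ) / (n + 1) ≤ P →
    |Y n i - -Real.log (1 - i / (n + 1)) / α| < δ)
include hY

theorem eventually_forall_expQQPlot_inter_exists_qqRay_dist_lt {K : Set (ℝ × ℝ)}
    (hK : IsCompact K) {δ : ℝ} (hδ : 0 < δ) :
    ∀ᶠ n in atTop, ∀ x ∈ expQQPlot n (Y n) ∩ K, ∃ y ∈ qqRay α, dist x y < δ := by
  obtain ⟨R, hR⟩ := hK.isBounded.subset_closedBall (0 : ℝ × ℝ)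
  filter_upwards [hY δ hδ (1 - Real.exp (-R)) (by linarith [Real.exp_pos (-R)])] with n hn
  rintro _ ⟨⟨i, hi, hin, rfl⟩, hxK⟩
  set p := (i : ℝ) / (n + 1)
  have hp1 : p < 1 := by
    rw [div_lt_one (by positivity)]
    exact_mod_cast Nat.lt_succ_of_le hin
  have hx0 : 0 ≤ -Real.log (1 - p) :=
    neg_nonneg.2 (Real.log_nonpos (by linarith) (by linarith [show 0 ≤ p by positivity]))
  have hxR : -Real.log (1 - p) ≤ R := by
    have := mem_closedBall_zero_iff.1 (hR hxK)
    rw [Prod.norm_def] at this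
    exact (Real.le_norm_self _).trans ((le_max_left _ _).trans this)
  have hpP : p ≤ 1 - Real.exp (-R) := by
    have := (Real.le_log_iff_exp_le (by linarith)).1 (by linarith : -R ≤ Real.log (1 - p))
    linarith
  refine ⟨_, ⟨-Real.log (1 - p), hx0, rfl⟩, ?_⟩
  rw [Prod.dist_eq, dist_self, Real.dist_eq]
  exact max_lt hδ (hn i hi hin hpP)

theorem eventually_exists_expQQPlot_dist_lt {y : ℝ × ℝ} (hy : y ∈ qqRay α) {δ : ℝ}
    (hδ : 0 < δ) : ∀ᶠ n in atTop, ∃ x ∈ expQQPlot n (Y n), dist x y < δ := by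
  obtain ⟨t, ht, rfl⟩ := hy
  set p := 1 - Real.exp (-t)
  have hp0 : 0 ≤ p := by linarith [Real.exp_le_one_iff.2 (neg_nonpos.2 ht)]
  have hp1 : p < 1 := by linarith [Real.exp_pos (-t)]
  set I : ℕ → ℕ := fun n => ⌊p * (n + 1)⌋₊ + 1
  have hI : Tendsto (fun n : ℕ => (I n : ℝ) / (n + 1)) atTop (𝓝 p) :=
    tendsto_natFloor_mul_add_one_div hp0
  have hcont : ContinuousAt (fun s : ℝ => (-Real.log (1 - s), -Real.log (1 - s) / α)) p := by
    have : ContinuousAt (fun s : ℝ => -Real.log (1 - s)) p :=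
      ((continuous_const.sub continuous_id).continuousAt.log (by simp [p])).neg
    exact this.prodMk (this.div_const α)
  have hval : -Real.log (1 - p) = t := by simp [p]
  have hx := hcont.tendsto.comp hI
  simp only [hval] at hx
  filter_upwards [hY (δ / 2) (by positivity) ((1 + p) / 2) (by linarith),
    hI.eventually (eventually_lt_nhds (by linarith : p < (1 + p) / 2)),
    Metric.tendsto_nhds.1 hx (δ / 2) (by positivity)] with n hn hpn hxn
  have hIn : I n ≤ n := by
    have := (div_lt_one (by positivity : (0 : ℝ) < n + 1)).1 (hpn.trans (by linarith))
    exact_mod_cast Nat.lt_succ_iff.1 (by exact_mod_cast this)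
  refine ⟨_, ⟨I n, Nat.le_add_left 1 _, hIn, rfl⟩, ?_⟩
  calc _ ≤ dist (-Real.log (1 - I n / (n + 1)), Y n (I n))
          (-Real.log (1 - I n / (n + 1)), -Real.log (1 - I n / (n + 1)) / α) +
        dist (-Real.log (1 - I n / (n + 1)), -Real.log (1 - I n / (n + 1)) / α) (t, t / α) :=
        dist_triangle _ _ _
    _ < δ / 2 + δ / 2 := by
        refine add_lt_add ?_ hxn
        rw [Prod.dist_eq, dist_self, Real.dist_eq]
        exact max_lt (by positivity) (hn _ (Nat.le_add_left 1 _) hIn hpn.le)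
    _ = δ := add_halves δ

theorem tendsto_sSup_image_expQQPlot {h : ℝ × ℝ → ℝ} (hc : Continuous h) (h0 : ∀ x, 0 ≤ h x)
    (hs : HasCompactSupport h) :
    Tendsto (fun n => sSup (h '' expQQPlot n (Y n))) atTop (𝓝 (sSup (h '' qqRay α))) :=
  tendsto_sSup_image_of_forall_near hc h0 hs
    (fun _ hK _ hδ => eventually_forall_expQQPlot_inter_exists_qqRay_dist_lt hY hK hδ)
    (fun _ hy _ hδ => eventually_exists_expQQPlot_dist_lt hY hy hδ)

end QQPlot

theorem norm_sSup_image_le {E : Type*} [Nonempty E] {h : E → ℝ} (h0 : ∀ x, 0 ≤ h x) {B : ℝ}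
    (hB : ∀ x, ‖h x‖ ≤ B) (s : Set E) : ‖sSup (h '' s)‖ ≤ B := by
  rw [Real.norm_of_nonneg (Real.sSup_nonneg (by rintro _ ⟨x, -, rfl⟩; exact h0 x))]
  refine Real.sSup_le ?_ ((norm_nonneg _).trans (hB (Classical.arbitrary E)))
  rintro _ ⟨x, -, rfl⟩
  exact (Real.le_norm_self _).trans (hB x)

theorem measurable_sSup_image_expQQPlot {Ω : Type*} [MeasurableSpace Ω] {h : ℝ × ℝ → ℝ}
    (hc : Continuous h) {n : ℕ} {Y : ℕ → Ω → ℝ} (hY : ∀ i, 1 ≤ i → i ≤ n → Measurable (Y i)) :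
    Measurable fun ω => sSup (h '' expQQPlot n fun i => Y i ω) := by
  have himage (ω : Ω) : h '' expQQPlot n (fun i => Y i ω) =
      (fun i : ℕ => h (-Real.log (1 - (i : ℝ) / (n + 1)), Y i ω)) '' Icc 1 n := by
    ext
    simp [expQQPlot, and_assoc]
  simp_rw [himage, sSup_image']
  exact Measurable.iSup fun i => hc.measurable.comp (measurable_const.prodMk (hY i i.2.1 i.2.2))

section StrongLaw

variable {Ω : Type*} [MeasurableSpace Ω] {μ : Measure Ω}

theorem identDistrib_of_measure_le_eq [IsFiniteMeasure μ] {X Y : Ω → ℝ} (hX : Measurable X)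
    (hY : Measurable Y) (h : ∀ x, μ {ω | X ω ≤ x} = μ {ω | Y ω ≤ x}) : IdentDistrib X Y μ μ := by
  refine ⟨hX.aemeasurable, hY.aemeasurable, Measure.ext_of_Iic _ _ fun x => ?_⟩
  rw [Measure.map_apply hX measurableSet_Iic, Measure.map_apply hY measurableSet_Iic]
  exact h x

theorem ae_tendsto_card_filter_le_div [IsProbabilityMeasure μ] {Z : ℕ → Ω → ℝ}
    (hZ : ∀ i, Measurable (Z i)) (hindep : Pairwise fun i j => IndepFun (Z i) (Z j) μ)
    (hident : ∀ i, IdentDistrib (Z i) (Z 0) μ μ) (y : ℝ) :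
    ∀ᵐ ω ∂μ, Tendsto (fun n : ℕ => (#{j ∈ Finset.range n | Z j ω ≤ y} : ℝ) / n) atTop
      (𝓝 (μ.real {ω | Z 0 ω ≤ y})) := by
  set f : ℝ → ℝ := (Iic y).indicator 1
  have hf : Measurable f := measurable_const.indicator measurableSet_Iic
  have hcount (ω : Ω) (n : ℕ) :
      (#{j ∈ Finset.range n | Z j ω ≤ y} : ℝ) = ∑ j ∈ Finset.range n, f (Z j ω) := by
    rw [Finset.card_filter]
    push_cast
    simp [f, indicator_apply]
  have hmean : ∫ ω, f (Z 0 ω) ∂μ = μ.real {ω | Z 0 ω ≤ y} := by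
    rw [← integral_indicator_one (measurableSet_le (hZ 0) measurable_const)]
    rfl
  have hint : Integrable (f ∘ Z 0) μ :=
    (integrable_const (1 : ℝ)).indicator measurableSet_Iic |>.comp_measurable (hZ 0)
  have := strong_law_ae_real (fun j => f ∘ Z j) hint (fun i j hij => (hindep hij).comp hf hf)
    fun i => (hident i).comp hf
  simp only [Function.comp_apply, hmean] at this
  simpa only [hcount] using this

end StrongLaw

section Pareto

variable {Ω : Type*} [MeasurableSpace Ω] {μ : Measure Ω} {X : ℕ → Ω → ℝ} {α : ℝ}

theorem ae_forall_one_lt (h1 : ∀ i, μ {ω | X i ω ≤ 1} = 0) : ∀ᵐ ω ∂μ, ∀ i, 1 < X i ω :=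
  ae_all_iff.2 fun i => (measure_eq_zero_iff_ae_notMem.1 (h1 i)).mono
    fun _ hω => lt_of_not_ge hω

theorem ae_tendsto_card_div_paretoQuantile [IsProbabilityMeasure μ] (hα : 0 < α)
    (hmeas : ∀ i, Measurable (X i)) (hindep : iIndepFun X μ)
    (hcdf : ∀ i, ∀ x : ℝ, 1 < x → μ {ω | X i ω ≤ x} = ENNReal.ofReal (1 - x ^ (-α)))
    (hcdf0 : ∀ i, ∀ x : ℝ, x ≤ 1 → μ {ω | X i ω ≤ x} = 0) :
    ∀ᵐ ω ∂μ, ∀ j m : ℕ, 0 < j → j < m →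
      Tendsto (fun n : ℕ => (#{k ∈ Finset.range n |
        X (k + 1) ω ≤ Real.exp (-Real.log (1 - j / m) / α)} : ℝ) / n) atTop (𝓝 (j / m)) := by
  have hident (i : ℕ) : IdentDistrib (X (i + 1)) (X 1) μ μ :=
    identDistrib_of_measure_le_eq (hmeas _) (hmeas _) fun x => by
      rcases lt_or_ge 1 x with hx | hx
      · rw [hcdf _ x hx, hcdf 1 x hx]
      · rw [hcdf0 _ x hx, hcdf0 1 x hx]
  refine ae_all_iff.2 fun j => ae_all_iff.2 fun m => ?_
  by_cases hjm : 0 < j ∧ j < m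
  swap
  · exact ae_of_all _ fun ω hj hm => absurd ⟨hj, hm⟩ hjm
  set r : ℝ := j / m
  -- `exp (-log (1 - r) / α)` is the `r`-quantile of the Pareto(`α`) distribution.
  have hr0 : 0 < r := div_pos (by exact_mod_cast hjm.1) (by exact_mod_cast hjm.1.trans hjm.2)
  have hr1 : r < 1 := (div_lt_one (by exact_mod_cast hjm.1.trans hjm.2)).2 (by exact_mod_cast hjm.2)
  have hq : 1 < Real.exp (-Real.log (1 - r) / α) :=
    Real.one_lt_exp_iff.2 (div_pos (neg_pos.2 (Real.log_neg (by linarith) (by linarith))) hα)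
  have hF : μ.real {ω | X 1 ω ≤ Real.exp (-Real.log (1 - r) / α)} = r := by
    rw [measureReal_def, hcdf 1 _ hq, ← Real.exp_mul,
      show -Real.log (1 - r) / α * -α = Real.log (1 - r) by field_simp,
      Real.exp_log (by linarith), ENNReal.toReal_ofReal (by linarith)]
    ring
  filter_upwards [ae_tendsto_card_filter_le_div (Z := fun k => X (k + 1)) (fun k => hmeas _)
    (fun a b hab => hindep.indepFun (by simpa using hab)) hident
    (Real.exp (-Real.log (1 - r) / α))] with ω hω _ _
  rwa [hF] at hω

theorem ae_tendsto_sSup_image_expQQPlot_log [IsProbabilityMeasure μ] (hα : 0 < α)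
    (hmeas : ∀ i, Measurable (X i)) (hindep : iIndepFun X μ)
    (hcdf : ∀ i, ∀ x : ℝ, 1 < x → μ {ω | X i ω ≤ x} = ENNReal.ofReal (1 - x ^ (-α)))
    (hcdf0 : ∀ i, ∀ x : ℝ, x ≤ 1 → μ {ω | X i ω ≤ x} = 0) {ord : ℕ → ℕ → Ω → ℝ}
    (hord : IsIncOrderStat X ord) {h : ℝ × ℝ → ℝ} (hc : Continuous h) (h0 : ∀ x, 0 ≤ h x)
    (hs : HasCompactSupport h) :
    ∀ᵐ ω ∂μ, Tendsto (fun n => sSup (h '' expQQPlot n fun i => Real.log (ord n i ω))) atTop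
      (𝓝 (sSup (h '' qqRay α))) := by
  filter_upwards [ae_forall_one_lt fun i => hcdf0 i 1 le_rfl,
    ae_tendsto_card_div_paretoQuantile hα hmeas hindep hcdf hcdf0] with ω hX1 hN
  have hord1 {n i : ℕ} (hi : 1 ≤ i) (hin : i ≤ n) : 1 < ord n i ω := by
    refine lt_of_not_ge fun hle => ?_
    have := (hord.le_iff_le_card ω hi hin 1).1 hle
    rw [Finset.filter_false_of_mem fun k _ => not_le.2 (hX1 (k + 1)), Finset.card_empty] at this
    omega
  refine tendsto_sSup_image_expQQPlot (Y := fun n i => Real.log (ord n i ω))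
    (fun δ hδ P hP => ?_) hc h0 hs
  refine eventually_abs_sub_quantile_lt (Q := fun p => -Real.log (1 - p) / α)
    (N := fun n y => #{k ∈ Finset.range n | X (k + 1) ω ≤ Real.exp y}) ?_ ?_ ?_ hN hδ hP
  · exact ((continuousOn_const.sub continuousOn_id).log
      fun p hp => sub_ne_zero.2 hp.2.ne').neg.div_const α
  · intro n i hi hin
    simpa using Real.log_nonneg (hord1 hi hin).le
  · intro n i y hi hin
    rw [Real.log_le_iff_le_exp (by linarith [hord1 hi hin])]
    exact hord.le_iff_le_card ω hi hin _

end Pareto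

/-- If `X 1, X 2, …` are iid Pareto(`α`), `α > 0`
(`F(x) = 1 - x^{-α}` for `x > 1`), then the log-transformed QQ-plot sets
`{(-log(1 - i/(n+1)), log X_{i:n}) : 1 ≤ i ≤ n}` converge in probability, in the Fell
topology, to the ray `{(x, x/α) : 0 ≤ x < ∞}`; equivalently, for every continuous
`h : ℝ² → [0,∞)` with compact support, the expected sup of `h` over the random set
converges to the sup of `h` over the limit set. -/
theorem pareto_qqplot_tendstoInProb {Ω : Type*} [MeasurableSpace Ω]
    (μ : Measure Ω) [IsProbabilityMeasure μ]
    (X : ℕ → Ω → ℝ) (α : ℝ) (hα : 0 < α) (ord : ℕ → ℕ → Ω → ℝ)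
    (hmeas : ∀ i, Measurable (X i))
    (hindep : iIndepFun X μ)
    (hcdf : ∀ i, ∀ x : ℝ, 1 < x → μ {ω | X i ω ≤ x} = ENNReal.ofReal (1 - x ^ (-α)))
    (hcdf0 : ∀ i, ∀ x : ℝ, x ≤ 1 → μ {ω | X i ω ≤ x} = 0)
    (hord : IsIncOrderStat X ord) :
    ∀ h : ℝ × ℝ → ℝ, Continuous h → (∀ q, 0 ≤ h q) → HasCompactSupport h →
      Tendsto
        (fun n => ∫ ω, sSup (h '' {q : ℝ × ℝ | ∃ i : ℕ, 1 ≤ i ∧ i ≤ n ∧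
            q = (-Real.log (1 - (i : ℝ) / ((n : ℝ) + 1)), Real.log (ord n i ω))}) ∂μ)
        atTop
        (nhds (sSup (h '' {q : ℝ × ℝ | ∃ t : ℝ, 0 ≤ t ∧ q = (t, t / α)}))) := by
  intro h hc h0 hs
  obtain ⟨B, hB⟩ := hc.bounded_above_of_compact_support hs
  have hlim := tendsto_integral_of_dominated_convergence (fun _ => B)
    (fun n => (measurable_sSup_image_expQQPlot hc fun i hi hin =>
      Real.measurable_log.comp (hord.measurable hmeas hi hin)).aestronglyMeasurable)
    (integrable_const B) (fun n => ae_of_all _ fun ω => norm_sSup_image_le h0 hB _)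
    (ae_tendsto_sSup_image_expQQPlot_log hα hmeas hindep hcdf hcdf0 hord hc h0 hs)
  rwa [integral_const, probReal_univ, one_smul] at hlim
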